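/- arXiv:1804.04746 — 6 statements merged into one kernel-verified Lean document; each statement's English description precedes it below -/
import Mathlib

section
/- With λ, Δ, S, C, a, b, g̃ as defined, for every t ∈ (0, Δ) the steady-state balance equation holds: C·exp(λt/2) = (1/2)·[ λ·exp(λt)·( ∫_t^Δ C·exp(λτ/2)·exp(−λτ) dτ + b·exp(−λΔ) ) + λ·exp(λ(t−Δ))·( a + ∫_0^Δ C·exp(λτ/2)·exp(−λτ) dτ + b·exp(−λΔ) ) ]. (This is the steady-state relation g̃(t) = ½[∫_{Δ−t}^∞ g(t+x−Δ)·λe^{−λx} dx + ∫_0^∞ g(t+x)·λe^{−λx} dx] from the proof of Proposition 1, written out explicitly for g = g̃ + a·δ_0 + b·δ_Δ.) -/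
/-!
Substituting `g̃(τ) = C e^{λτ/2}` and integrating the exponentials, the right-hand side becomes
`C e^{λt/2}` plus `e^{λt}` times a constant independent of `t`. That constant vanishes precisely
because of the normalisation `8 C S = λ (1 + e^{-λΔ})` defining `C`, together with `λ a = 2 C`
and the formula for `b`.
-/

open Real Set MeasureTheory intervalIntegral

theorem integral_exp_const_mul {c : ℝ} (hc : c ≠ 0) (p q : ℝ) :
    ∫ x in p..q, exp (c * x) = (exp (c * q) - exp (c * p)) / c := by
  rw [integral_comp_mul_left exp hc, integral_exp, smul_eq_mul]
  field_simp

theorem integral_exp_half_mul_exp_neg {lam : ℝ} (hlam : lam ≠ 0) (C p q : ℝ) :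
    ∫ τ in p..q, C * exp (lam * τ / 2) * exp (-(lam * τ)) =
      2 * C / lam * ((exp (lam * p / 2))⁻¹ - (exp (lam * q / 2))⁻¹) := by
  have hexp (τ : ℝ) : C * exp (lam * τ / 2) * exp (-(lam * τ)) = C * exp (-(lam / 2) * τ) := by
    rw [mul_assoc, ← exp_add]
    ring_nf
  have hinv (x : ℝ) : exp (-(lam / 2) * x) = (exp (lam * x / 2))⁻¹ := by
    rw [← exp_neg]
    ring_nf
  simp_rw [hexp, intervalIntegral.integral_const_mul,
    integral_exp_const_mul (by simpa using hlam : -(lam / 2) ≠ 0), hinv]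
  field_simp
  ring

theorem exp_add_exp_neg_sub_one_pos (x : ℝ) : 0 < exp x + exp (-x) - 1 := by
  have := one_le_cosh x
  rw [cosh_eq] at this
  linarith

theorem balance_of_normalization {lam C a b u v : ℝ} (hlam : lam ≠ 0) (hu : u ≠ 0) (hv : v ≠ 0)
    (hC : 8 * C * (v + v⁻¹ - 1) = lam * (1 + (v ^ 2)⁻¹))
    (ha : a = 2 * C / lam) (hb : b = 1 / 2 - 2 * v / lam * C) :
    C * u = 1 / 2 * (lam * u ^ 2 * (2 * C / lam * (u⁻¹ - v⁻¹) + b * (v ^ 2)⁻¹) +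
      lam * (u ^ 2 / v ^ 2) * (a + 2 * C / lam * (1 - v⁻¹) + b * (v ^ 2)⁻¹)) := by
  subst ha hb
  field_simp
  field_simp at hC
  linear_combination u * hC

theorem steady_state_balance_general
    (lam Δ S C a b : ℝ) (hlam : 0 < lam)
    (hS : S = Real.exp (lam * Δ / 2) + Real.exp (-(lam * Δ) / 2) - 1)
    (hC : C = lam * (1 + Real.exp (-(lam * Δ))) / (8 * S))
    (ha : a = 2 * C / lam)
    (hb : b = 1 / 2 - (2 * Real.exp (lam * Δ / 2) / lam) * C) :
    ∀ t ∈ Set.Ioo (0 : ℝ) Δ,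
      C * Real.exp (lam * t / 2) =
        (1 / 2) *
          ( lam * Real.exp (lam * t) *
              ((∫ τ in t..Δ, C * Real.exp (lam * τ / 2) * Real.exp (-(lam * τ))) +
                b * Real.exp (-(lam * Δ)))
          + lam * Real.exp (lam * (t - Δ)) *
              (a + (∫ τ in (0 : ℝ)..Δ, C * Real.exp (lam * τ / 2) * Real.exp (-(lam * τ))) +
                b * Real.exp (-(lam * Δ))) ) := by
  intro t _
  have hsq (x : ℝ) : exp (lam * x) = exp (lam * x / 2) ^ 2 := by
    rw [← exp_nat_mul]
    ring_nf
  have hS_pos : 0 < S := by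
    rw [hS, neg_div]
    exact exp_add_exp_neg_sub_one_pos _
  have hnorm : 8 * C * (exp (lam * Δ / 2) + (exp (lam * Δ / 2))⁻¹ - 1) =
      lam * (1 + (exp (lam * Δ / 2) ^ 2)⁻¹) := by
    rw [← exp_neg, ← hsq, ← exp_neg, ← neg_div, ← hS, hC]
    field_simp
  rw [integral_exp_half_mul_exp_neg hlam.ne', integral_exp_half_mul_exp_neg hlam.ne',
    mul_sub lam t Δ, exp_sub, exp_neg, hsq t, hsq Δ, mul_zero, zero_div, exp_zero, inv_one]
  exact balance_of_normalization hlam.ne' (exp_pos _).ne' (exp_pos _).ne' hnorm ha hb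

/-- Steady-state balance equation for the continuous part `g̃` of the
half-distribution `g = g̃ + a·δ₀ + b·δ_Δ` under the flexible-order policy
(Proposition 1 of the paper), written out explicitly for every `t ∈ (0, Δ)`. -/
theorem steady_state_balance
    (lam Δ S C a b : ℝ) (hlam : 0 < lam) (hΔ : 0 < Δ)
    (hS : S = Real.exp (lam * Δ / 2) + Real.exp (-(lam * Δ) / 2) - 1)
    (hC : C = lam * (1 + Real.exp (-(lam * Δ))) / (8 * S))
    (ha : a = 2 * C / lam)
    (hb : b = 1 / 2 - (2 * Real.exp (lam * Δ / 2) / lam) * C) :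
    ∀ t ∈ Set.Ioo (0 : ℝ) Δ,
      C * Real.exp (lam * t / 2) =
        (1 / 2) *
          ( lam * Real.exp (lam * t) *
              ((∫ τ in t..Δ, C * Real.exp (lam * τ / 2) * Real.exp (-(lam * τ))) +
                b * Real.exp (-(lam * Δ)))
          + lam * Real.exp (lam * (t - Δ)) *
              (a + (∫ τ in (0 : ℝ)..Δ, C * Real.exp (lam * τ / 2) * Real.exp (-(lam * τ))) +
                b * Real.exp (-(lam * Δ))) ) :=
  steady_state_balance_general lam Δ S C a b hlam hS hC ha hb
end

section
/- With λ, Δ, S, C, a, b as defined, the point mass at zero delay satisfies its steady-state equation: a = ((exp(−λΔ) + 1)/2) · ( a + b·exp(−λΔ) + ∫_0^Δ C·exp(λτ/2)·exp(−λτ) dτ ). (This is the relation ĝ(0) = ((e^{−λΔ}+1)/2)·I with I = ∫_0^∞ e^{−λτ} g(τ) dτ from the proof of Proposition 1, written out for g = g̃ + a·δ_0 + b·δ_Δ.) -/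
open Real Set MeasureTheory intervalIntegral

lemma exp_int (c Δ : ℝ) (hc : c ≠ 0) :
    (∫ τ in (0:ℝ)..Δ, Real.exp (c * τ)) = (Real.exp (c * Δ) - 1) / c := by
  rw [intervalIntegral.integral_comp_mul_left (fun x => Real.exp x) hc]
  simp [integral_exp, mul_comm, div_eq_inv_mul]

/-- Steady-state equation for the point mass `a = ĝ(0)` at zero delay
(Proposition 1 of the paper): `ĝ(0) = ((e^{−λΔ}+1)/2)·I` with
`I = ∫₀^∞ e^{−λτ} g(τ) dτ`, written out for `g = g̃ + a·δ₀ + b·δ_Δ`. -/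
theorem point_mass_zero_eq
    (lam Δ S C a b : ℝ) (hlam : 0 < lam) (hΔ : 0 < Δ)
    (hS : S = Real.exp (lam * Δ / 2) + Real.exp (-(lam * Δ) / 2) - 1)
    (hC : C = lam * (1 + Real.exp (-(lam * Δ))) / (8 * S))
    (ha : a = 2 * C / lam)
    (hb : b = 1 / 2 - (2 * Real.exp (lam * Δ / 2) / lam) * C) :
    a = ((Real.exp (-(lam * Δ)) + 1) / 2) *
        (a + b * Real.exp (-(lam * Δ)) +
          ∫ τ in (0 : ℝ)..Δ, C * Real.exp (lam * τ / 2) * Real.exp (-(lam * τ))) := by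
  have hc : (-(lam/2)) ≠ 0 := neg_ne_zero.mpr (by positivity)
  have hfun : ∀ τ : ℝ, C * Real.exp (lam * τ / 2) * Real.exp (-(lam * τ))
      = C * Real.exp ((-(lam/2)) * τ) := by
    intro τ
    rw [mul_assoc, ← Real.exp_add]
    ring_nf
  have hint : (∫ τ in (0:ℝ)..Δ, C * Real.exp (lam * τ / 2) * Real.exp (-(lam * τ)))
      = C * ((Real.exp ((-(lam/2)) * Δ) - 1) / (-(lam/2))) := by
    simp only [hfun]
    rw [intervalIntegral.integral_const_mul, exp_int _ _ hc]
  subst hS hC ha hb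
  rw [hint]
  set u := Real.exp (-(lam * Δ / 2)) with hu
  have hupos : 0 < u := Real.exp_pos _
  have hu0 : u ≠ 0 := ne_of_gt hupos
  have he0 : Real.exp (lam * Δ / 2) = u⁻¹ := by
    rw [hu, ← Real.exp_neg]; ring_nf
  have he1 : Real.exp (-(lam * Δ)) = u ^ 2 := by
    rw [hu, ← Real.exp_nat_mul]; ring_nf
  have he2 : Real.exp (-(lam * Δ) / 2) = u := by rw [hu]; ring_nf
  have he3 : Real.exp ((-(lam/2)) * Δ) = u := by rw [hu]; ring_nf
  rw [he0, he1, he2, he3]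
  have hP0 : (1 : ℝ) - u + u ^ 2 ≠ 0 := by nlinarith [sq_nonneg (u - 1), sq_nonneg u]
  have hrw : u⁻¹ + u - 1 = (1 - u + u ^ 2) / u := by field_simp; ring
  rw [hrw]
  have hlam0 : lam ≠ 0 := ne_of_gt hlam
  field_simp
  ring
end

section
/- With λ, Δ, S, C, P_d as defined, the function P_d is monotone nondecreasing on the interval [0, Δ] (so that P_d is a genuine cumulative distribution function of the steady-state vehicle delay). -/
/-!
In the variables `x = exp (λt/2)` and `y = exp (λΔ/2)` the delay distribution reads
`P = K (x - y/x + y/x²) + (1 - 1/x²)/2` with `K = 4C/λ = (y² + 1) / (2y(y² - y + 1))`, and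
`x ≥ 1` increases with `t`. For `1 ≤ a ≤ b` the increment `P(b) - P(a)` factors as
`(b - a)/(a²b²)` times `K (a²b² + y(a - 1)(b - 1) - y) + (a + b)/2 ≥ 1 - K (y - 1)`,
and `K (y - 1) ≤ 1` is the polynomial inequality `y³ - y² + y + 1 > 0` for `y > 0`.
-/

open Real Set

noncomputable section

namespace DelayDistribution

/-- The delay distribution in the variables `x = exp (λt/2)` and `y = exp (λΔ/2)`. -/
def cdf (K y x : ℝ) : ℝ :=
  K * (x - y / x + y / x ^ 2) + (1 - 1 / x ^ 2) / 2

/-- The coefficient `4C/λ` as a function of `y = exp (λΔ/2)`. -/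
def coeff (y : ℝ) : ℝ :=
  (y ^ 2 + 1) / (2 * y * (y ^ 2 - y + 1))

lemma cdf_sub_cdf (K y : ℝ) {a b : ℝ} (ha : a ≠ 0) (hb : b ≠ 0) :
    cdf K y b - cdf K y a = (b - a) / (a ^ 2 * b ^ 2) *
      (K * (a ^ 2 * b ^ 2 + y * (a - 1) * (b - 1) - y) + (a + b) / 2) := by
  unfold cdf
  field_simp
  ring

lemma monotoneOn_cdf {K y : ℝ} (hK : 0 ≤ K) (hKy : K * (y - 1) ≤ 1) (hy : 0 ≤ y) :
    MonotoneOn (cdf K y) (Ici 1) := by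
  intro a (ha : 1 ≤ a) b (hb : 1 ≤ b) hab
  rw [← sub_nonneg, cdf_sub_cdf K y (by positivity) (by positivity)]
  have hab1 : 1 ≤ a ^ 2 * b ^ 2 := one_le_mul_of_one_le_of_one_le
    (one_le_pow₀ ha) (one_le_pow₀ hb)
  have hy_ab : 0 ≤ y * (a - 1) * (b - 1) :=
    mul_nonneg (mul_nonneg hy (sub_nonneg.2 ha)) (sub_nonneg.2 hb)
  have hbracket : 1 - K * (y - 1) ≤
      K * (a ^ 2 * b ^ 2 + y * (a - 1) * (b - 1) - y) + (a + b) / 2 := by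
    have := mul_le_mul_of_nonneg_left
      (show 1 - y ≤ a ^ 2 * b ^ 2 + y * (a - 1) * (b - 1) - y by linarith) hK
    linarith
  exact mul_nonneg (div_nonneg (sub_nonneg.2 hab) (by positivity)) (by linarith)

lemma coeff_pos {y : ℝ} (hy : 0 < y) : 0 < coeff y := by
  have : 0 < y ^ 2 - y + 1 := by nlinarith [sq_nonneg (y - 1)]
  unfold coeff
  positivity

lemma coeff_mul_sub_one_le_one {y : ℝ} (hy : 0 < y) : coeff y * (y - 1) ≤ 1 := by
  have : 0 < y ^ 2 - y + 1 := by nlinarith [sq_nonneg (y - 1)]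
  rw [coeff, div_mul_eq_mul_div, div_le_one (by positivity)]
  nlinarith [sq_nonneg y, mul_pos hy hy]

lemma four_mul_div_eq_coeff {lam Δ S C : ℝ} (hlam : lam ≠ 0)
    (hS : S = exp (lam * Δ / 2) + exp (-(lam * Δ) / 2) - 1)
    (hC : C = lam * (1 + exp (-(lam * Δ))) / (8 * S)) :
    4 * C / lam = coeff (exp (lam * Δ / 2)) := by
  set y := exp (lam * Δ / 2)
  have hy : 0 < y := exp_pos _
  have hinv : exp (-(lam * Δ) / 2) = y⁻¹ := by rw [neg_div, exp_neg]
  have hinv2 : exp (-(lam * Δ)) = (y ^ 2)⁻¹ := by rw [← exp_nat_mul, exp_neg]; ring_nf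
  have : y ^ 2 - y + 1 ≠ 0 := by nlinarith [sq_nonneg (y - 1)]
  rw [hC, hS, hinv, hinv2, coeff]
  field_simp
  ring

lemma formula_eq_cdf (K lam Δ t : ℝ) :
    K * (exp (lam * t / 2) - exp (lam * (Δ - t) / 2) + exp (lam * Δ / 2 - lam * t)) +
        (1 - exp (-(lam * t))) / 2 =
      cdf K (exp (lam * Δ / 2)) (exp (lam * t / 2)) := by
  have hsq : exp (lam * t / 2) ^ 2 = exp (lam * t) := by rw [← exp_nat_mul]; ring_nf
  have h1 : exp (lam * (Δ - t) / 2) = exp (lam * Δ / 2) / exp (lam * t / 2) := by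
    rw [← exp_sub]; ring_nf
  have h2 : exp (lam * Δ / 2 - lam * t) = exp (lam * Δ / 2) / exp (lam * t / 2) ^ 2 := by
    rw [hsq, exp_sub]
  rw [cdf, h1, h2, exp_neg, ← hsq, one_div]

end DelayDistribution

open DelayDistribution in
theorem Pd_monotoneOn_general
    (lam Δ S C : ℝ) (P : ℝ → ℝ) (hlam : 0 < lam)
    (hS : S = Real.exp (lam * Δ / 2) + Real.exp (-(lam * Δ) / 2) - 1)
    (hC : C = lam * (1 + Real.exp (-(lam * Δ))) / (8 * S))
    (hP : ∀ t ∈ Set.Icc (0 : ℝ) Δ,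
      P t = (4 * C / lam) *
          (Real.exp (lam * t / 2) - Real.exp (lam * (Δ - t) / 2) +
            Real.exp (lam * Δ / 2 - lam * t)) +
        (1 - Real.exp (-(lam * t))) / 2) :
    MonotoneOn P (Set.Icc (0 : ℝ) Δ) := by
  have hy : 0 < exp (lam * Δ / 2) := exp_pos _
  have hcdf : MonotoneOn (cdf (coeff (exp (lam * Δ / 2))) (exp (lam * Δ / 2))) (Ici 1) :=
    monotoneOn_cdf (coeff_pos hy).le (coeff_mul_sub_one_le_one hy) hy.le
  have hx : ∀ t ∈ Icc 0 Δ, 1 ≤ exp (lam * t / 2) := fun t ht =>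
    one_le_exp (by have := ht.1; positivity)
  intro a ha b hb hab
  rw [hP a ha, hP b hb, four_mul_div_eq_coeff hlam.ne' hS hC, formula_eq_cdf, formula_eq_cdf]
  exact hcdf (hx a ha) (hx b hb) (exp_le_exp.2 (by gcongr))

/-- The steady-state cumulative distribution of vehicle delay `P_d` from
Proposition 1 of the paper is monotone nondecreasing on `[0, Δ]`, so it is a
genuine cumulative distribution function. -/
theorem Pd_monotoneOn
    (lam Δ S C : ℝ) (P : ℝ → ℝ) (hlam : 0 < lam) (hΔ : 0 < Δ)
    (hS : S = Real.exp (lam * Δ / 2) + Real.exp (-(lam * Δ) / 2) - 1)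
    (hC : C = lam * (1 + Real.exp (-(lam * Δ))) / (8 * S))
    (hP : ∀ t ∈ Set.Icc (0 : ℝ) Δ,
      P t = (4 * C / lam) *
          (Real.exp (lam * t / 2) - Real.exp (lam * (Δ - t) / 2) +
            Real.exp (lam * Δ / 2 - lam * t)) +
        (1 - Real.exp (-(lam * t))) / 2) :
    MonotoneOn P (Set.Icc (0 : ℝ) Δ) :=
  Pd_monotoneOn_general lam Δ S C P hlam hS hC hP
end
end

section
/- With λ, Δ, S, C, P_d as defined, the expected steady-state vehicle delay satisfies ∫_0^Δ (1 − P_d(t)) dt = Δ/2 + (exp(−λΔ) − 1) / (2λ·(exp(λΔ/2) + exp(−λΔ/2) − 1)). (This is the paper's closed-form expected delay E(d) = ∫_0^Δ t dP_d(t), evaluated via the tail-integral formula.) -/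
/-!
The terms `e^{λt/2}` and `e^{λ(Δ-t)/2}` of `P_d` are exchanged by the reflection `t ↦ Δ - t`
of `[0, Δ]`, so their integrals cancel; the remaining terms are elementary exponential integrals.
Writing `u = e^{λΔ/2}` and `v = e^{-λΔ/2}`, the result is then a rational identity in `u, v`
modulo `u v = 1`, with `S = u + v - 1 = 2 cosh (λΔ/2) - 1 ≥ 1` as the only denominator to avoid.
-/

open Real intervalIntegral

theorem integral_comp_sub_left_self {E : Type*} [NormedAddCommGroup E] [NormedSpace ℝ E]
    (f : ℝ → E) (Δ : ℝ) : ∫ t in (0 : ℝ)..Δ, f (Δ - t) = ∫ t in (0 : ℝ)..Δ, f t := by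
  simp [integral_comp_sub_left f (a := 0) (b := Δ) Δ]

theorem integral_exp_mul_add {a b c : ℝ} (hc : c ≠ 0) (d : ℝ) :
    ∫ x in a..b, exp (c * x + d) = (exp (c * b + d) - exp (c * a + d)) / c := by
  rw [integral_comp_mul_add (fun x => exp x) hc, integral_exp, smul_eq_mul, inv_mul_eq_div]

theorem integral_exp_sub_mul {lam : ℝ} (hlam : lam ≠ 0) (Δ d : ℝ) :
    ∫ t in (0 : ℝ)..Δ, exp (d - lam * t) = (exp d - exp (d - lam * Δ)) / lam := by
  have h := integral_exp_mul_add (a := 0) (b := Δ) (neg_ne_zero.2 hlam) d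
  simp only [neg_mul, neg_add_eq_sub, mul_zero, div_neg, zero_add] at h
  rw [h, ← neg_div, neg_sub]

theorem one_le_exp_add_exp_neg_sub_one (x : ℝ) : 1 ≤ exp x + exp (-x) - 1 := by
  have h := one_le_cosh x
  rw [cosh_eq] at h
  linarith

/-- The delay distribution `P_d` of the paper, with the prefactor `4C/λ` abstracted as `K`. -/
noncomputable def delayCDF (lam K Δ t : ℝ) : ℝ :=
  K * (exp (lam * t / 2) - exp (lam * (Δ - t) / 2) + exp (lam * Δ / 2 - lam * t)) +
    (1 - exp (-(lam * t))) / 2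

theorem integral_one_sub_delayCDF {lam : ℝ} (hlam : lam ≠ 0) (K Δ : ℝ) :
    ∫ t in (0 : ℝ)..Δ, (1 - delayCDF lam K Δ t) =
      Δ / 2 + (1 - exp (-(lam * Δ))) / (2 * lam) -
        K * ((exp (lam * Δ / 2) - exp (lam * Δ / 2 - lam * Δ)) / lam) := by
  have hint : ∀ f : ℝ → ℝ, Continuous f → IntervalIntegrable f MeasureTheory.volume 0 Δ :=
    fun f hf => hf.intervalIntegrable 0 Δ
  have hbracket : ∫ t in (0 : ℝ)..Δ,
      (exp (lam * t / 2) - exp (lam * (Δ - t) / 2) + exp (lam * Δ / 2 - lam * t)) =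
        (exp (lam * Δ / 2) - exp (lam * Δ / 2 - lam * Δ)) / lam := by
    rw [integral_add (hint _ (by fun_prop)) (hint _ (by fun_prop)),
      integral_sub (hint _ (by fun_prop)) (hint _ (by fun_prop)),
      integral_comp_sub_left_self (fun x => exp (lam * x / 2)), sub_self, zero_add,
      integral_exp_sub_mul hlam]
  have hdecay : ∫ t in (0 : ℝ)..Δ, exp (-(lam * t)) = (1 - exp (-(lam * Δ))) / lam := by
    simpa using integral_exp_sub_mul hlam Δ 0
  have hsplit : (fun t => 1 - delayCDF lam K Δ t) = fun t => (1 + exp (-(lam * t))) / 2 -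
      K * (exp (lam * t / 2) - exp (lam * (Δ - t) / 2) + exp (lam * Δ / 2 - lam * t)) := by
    funext t
    unfold delayCDF
    ring
  rw [hsplit, integral_sub (hint _ (by fun_prop)) (hint _ (by fun_prop)), integral_const_mul,
    hbracket, integral_div, integral_add (hint _ (by fun_prop)) (hint _ (by fun_prop)), hdecay,
    integral_one, sub_zero]
  ring

/-- Expected steady-state vehicle delay via the tail-integral formula
(equation (15) of the paper): `∫₀^Δ (1 − P_d(t)) dt = Δ/2 +
(e^{−λΔ} − 1)/(2λ(e^{λΔ/2} + e^{−λΔ/2} − 1))`. -/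
theorem expected_delay_tail_integral
    (lam Δ S C : ℝ) (P : ℝ → ℝ) (hlam : 0 < lam) (hΔ : 0 < Δ)
    (hS : S = Real.exp (lam * Δ / 2) + Real.exp (-(lam * Δ) / 2) - 1)
    (hC : C = lam * (1 + Real.exp (-(lam * Δ))) / (8 * S))
    (hP : ∀ t ∈ Set.Icc (0 : ℝ) Δ,
      P t = (4 * C / lam) *
          (Real.exp (lam * t / 2) - Real.exp (lam * (Δ - t) / 2) +
            Real.exp (lam * Δ / 2 - lam * t)) +
        (1 - Real.exp (-(lam * t))) / 2) :
    (∫ t in (0 : ℝ)..Δ, (1 - P t)) =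
      Δ / 2 + (Real.exp (-(lam * Δ)) - 1) /
        (2 * lam * (Real.exp (lam * Δ / 2) + Real.exp (-(lam * Δ) / 2) - 1)) := by
  have hS_pos : 0 < S := by
    have h := one_le_exp_add_exp_neg_sub_one (lam * Δ / 2)
    rw [← neg_div] at h
    linarith
  have hcdf : Set.EqOn (fun t => 1 - P t) (fun t => 1 - delayCDF lam (4 * C / lam) Δ t)
      (Set.uIcc 0 Δ) := by
    intro t ht
    rw [Set.uIcc_of_le hΔ.le] at ht
    simp only [hP t ht, delayCDF]
  rw [integral_congr hcdf, integral_one_sub_delayCDF hlam.ne', hC, ← hS]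
  set u := exp (lam * Δ / 2)
  set v := exp (-(lam * Δ) / 2)
  have huv : u * v = 1 := by rw [← exp_add, ← exp_zero]; ring_nf
  have hv_sq : exp (-(lam * Δ)) = v ^ 2 := by rw [← exp_nat_mul]; ring_nf
  have hv : exp (lam * Δ / 2 - lam * Δ) = v := by
    rw [show lam * Δ / 2 - lam * Δ = -(lam * Δ) / 2 by ring]
  rw [hv_sq, hv]
  field_simp
  linear_combination 8 * (1 - v ^ 2) * hS - 16 * v * huv
end

section
/- For all λ > 0 and Δ > 0, the expected steady-state vehicle delay E(λ, Δ) = Δ/2 + (exp(−λΔ) − 1) / (2λ·(exp(λΔ/2) + exp(−λΔ/2) − 1)) satisfies the strict bounds 0 < E(λ, Δ) < Δ/2. -/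
open Real

/-- The expected steady-state vehicle delay (equation (15) of the paper)
satisfies the strict bounds `0 < E(λ, Δ) < Δ/2` for all `λ > 0`, `Δ > 0`. -/
theorem expected_delay_bounds
    (lam Δ : ℝ) (hlam : 0 < lam) (hΔ : 0 < Δ) :
    0 < Δ / 2 + (Real.exp (-(lam * Δ)) - 1) /
        (2 * lam * (Real.exp (lam * Δ / 2) + Real.exp (-(lam * Δ) / 2) - 1)) ∧
    Δ / 2 + (Real.exp (-(lam * Δ)) - 1) /
        (2 * lam * (Real.exp (lam * Δ / 2) + Real.exp (-(lam * Δ) / 2) - 1)) < Δ / 2 := by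
  set x := lam * Δ with hxdef
  have hx : 0 < x := mul_pos hlam hΔ
  -- D > 1
  have h1' : x / 2 + 1 ≤ Real.exp (x / 2) := Real.add_one_le_exp _
  have h2 : -(x) / 2 + 1 < Real.exp (-(x) / 2) :=
    Real.add_one_lt_exp (ne_of_lt (by linarith : -(x) / 2 < 0))
  have hD : 1 < Real.exp (x / 2) + Real.exp (-(x) / 2) - 1 := by linarith
  have hden : 0 < 2 * lam * (Real.exp (x / 2) + Real.exp (-(x) / 2) - 1) := by positivity
  -- exp(-x) < 1 and exp(-x) > 1 - x
  have h3 : -x + 1 < Real.exp (-x) := Real.add_one_lt_exp (by linarith : (-x) ≠ 0)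
  have h4 : Real.exp (-x) < 1 := by
    rw [Real.exp_lt_one_iff]; linarith
  constructor
  · have key : -(Δ / 2) < (Real.exp (-x) - 1) /
        (2 * lam * (Real.exp (x / 2) + Real.exp (-(x) / 2) - 1)) := by
      rw [lt_div_iff₀ hden]
      have hxD : x < x * (Real.exp (x / 2) + Real.exp (-(x) / 2) - 1) := by
        nlinarith
      have : -(Δ / 2) * (2 * lam * (Real.exp (x / 2) + Real.exp (-(x) / 2) - 1))
          = -(x * (Real.exp (x / 2) + Real.exp (-(x) / 2) - 1)) := by
        rw [hxdef]; ring
      rw [this]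
      linarith
    linarith
  · have : (Real.exp (-x) - 1) /
        (2 * lam * (Real.exp (x / 2) + Real.exp (-(x) / 2) - 1)) < 0 :=
      div_neg_of_neg_of_pos (by linarith) hden
    linarith
end

section
/- The zero-delay probability function p₀(r) = (1 + exp(−r)) / (2(exp(r/2) + exp(−r/2) − 1)) is strictly decreasing on (0, ∞): for all 0 < r₁ < r₂ one has p₀(r₂) < p₀(r₁). (When the ratio between the temporal gap and the arrival interval increases, the probability of zero delay decreases.) -/
open Real Set

/-! The substitution `x = e^{r/2}` turns `p₀` into the rational function
`q x = (x² + 1) / (2x(x² − x + 1))`, and for `x, y > 0`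
`q x − q y = (y − x)(x²y² + x² + y² − x − y + 1) / (2xy(x² − x + 1)(y² − y + 1))`,
where every factor other than `y − x` is positive. -/

noncomputable def zeroDelayProb (r : ℝ) : ℝ :=
  (1 + exp (-r)) / (2 * (exp (r / 2) + exp (-r / 2) - 1))

noncomputable def zeroDelayRat (x : ℝ) : ℝ :=
  (x ^ 2 + 1) / (2 * x * (x ^ 2 - x + 1))

lemma zeroDelayProb_eq_zeroDelayRat (r : ℝ) :
    zeroDelayProb r = zeroDelayRat (exp (r / 2)) := by
  have hexp : exp (-r) = (exp (r / 2) ^ 2)⁻¹ := by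
    rw [← exp_nat_mul, ← exp_neg]; ring_nf
  have hexp_half : exp (-r / 2) = (exp (r / 2))⁻¹ := by
    rw [← exp_neg]; ring_nf
  rw [zeroDelayProb, zeroDelayRat, hexp, hexp_half]
  have hx := (exp_pos (r / 2)).ne'
  field_simp
  ring

lemma sq_sub_self_add_one_pos (x : ℝ) : 0 < x ^ 2 - x + 1 := by
  nlinarith [sq_nonneg (x - 1 / 2)]

lemma zeroDelayRat_sub {x y : ℝ} (hx : x ≠ 0) (hy : y ≠ 0) :
    zeroDelayRat x - zeroDelayRat y =
      (y - x) * (x ^ 2 * y ^ 2 + x ^ 2 + y ^ 2 - x - y + 1) /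
        (2 * x * y * (x ^ 2 - x + 1) * (y ^ 2 - y + 1)) := by
  have hx' := (sq_sub_self_add_one_pos x).ne'
  have hy' := (sq_sub_self_add_one_pos y).ne'
  rw [zeroDelayRat, zeroDelayRat, div_sub_div _ _ (by simp [*]) (by simp [*]),
    div_eq_div_iff (by simp [*]) (by simp [*])]
  ring

lemma strictAntiOn_zeroDelayRat : StrictAntiOn zeroDelayRat (Ioi 0) := by
  intro x (hx : 0 < x) y (hy : 0 < y) hxy
  have hnum : 0 < x ^ 2 * y ^ 2 + x ^ 2 + y ^ 2 - x - y + 1 := by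
    nlinarith [sq_nonneg (x * y), sq_nonneg (x - 1 / 2), sq_nonneg (y - 1 / 2)]
  have hden : 0 < 2 * x * y * (x ^ 2 - x + 1) * (y ^ 2 - y + 1) := by
    have := sq_sub_self_add_one_pos x
    have := sq_sub_self_add_one_pos y
    positivity
  rw [← sub_pos, zeroDelayRat_sub hx.ne' hy.ne']
  exact div_pos (mul_pos (sub_pos.2 hxy) hnum) hden

lemma strictAnti_zeroDelayProb : StrictAnti zeroDelayProb := fun r s hrs => by
  simp only [zeroDelayProb_eq_zeroDelayRat]
  exact strictAntiOn_zeroDelayRat (exp_pos _) (exp_pos _) (exp_lt_exp.2 (by linarith))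

/-- The zero-delay probability `p₀(r) = (1 + e^{−r})/(2(e^{r/2} + e^{−r/2} − 1))`
is strictly decreasing on `(0, ∞)`. -/
theorem p0_strictAntiOn :
    ∀ r₁ r₂ : ℝ, 0 < r₁ → r₁ < r₂ →
      (1 + Real.exp (-r₂)) / (2 * (Real.exp (r₂ / 2) + Real.exp (-r₂ / 2) - 1)) <
      (1 + Real.exp (-r₁)) / (2 * (Real.exp (r₁ / 2) + Real.exp (-r₁ / 2) - 1)) :=
  fun _ _ _ h => strictAnti_zeroDelayProb h
end
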